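/- Let k be an algebraically closed field, K a field extension of k, ν a valuation on K trivial on k with valuation ring R and maximal ideal m_R, and K' ⊆ K a subfield containing k with m_R ∩ K' ≠ {0}. Suppose f_1,...,f_r ∈ R ∩ K' are elements whose residues form a transcendence basis of (R ∩ K')/(m_R ∩ K') over k, and g_1,...,g_s ∈ R are elements such that the residues of f_1,...,f_r, g_1,...,g_s together are algebraically independent over k in R/m_R. Then g_1,...,g_s are algebraically independent over K'. -/

import Mathlib

/-!
Suppose `P(g) = 0` for a nonzero `P` with coefficients in `K'`. Dividing `P` by a coefficient
of largest valuation gives a polynomial `Q` with coefficients in `R ∩ K'`, one of them equal to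
`1`, with `Q(g) = 0`. Its reduction `Q̄` is nonzero and vanishes at the residues of the `gⱼ`.
By maximality of the `fᵢ`, the coefficients of `Q̄` are algebraic over `k[f̄]`; but the residues
of the `gⱼ` stay algebraically independent over the algebraic closure of `k[f̄]`, so `Q̄ = 0`.
-/

open IsLocalRing MvPolynomial

theorem MvPolynomial.mem_range_map_of_forall_coeff_mem {R S σ : Type*} [CommSemiring R]
    [CommSemiring S] {f : R →+* S} {p : MvPolynomial σ S} (h : ∀ m, p.coeff m ∈ Set.range f) :
    p ∈ Set.range (map f) :=
  mem_range_map_iff_coeffs_subset.mpr fun _ hc ↦ by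
    obtain ⟨m, -, rfl⟩ := mem_coeffs_iff.mp hc
    exact h m

theorem AlgebraicIndependent.eq_zero_of_eval_eq_zero_of_isAlgebraic_coeff
    {ι ι' k F : Type*} [CommRing k] [CommRing F] [IsDomain F] [Algebra k F]
    {u : ι → F} {v : ι' → F} (huv : AlgebraicIndependent k (Sum.elim u v))
    {Q : MvPolynomial ι' F} (hQ : ∀ m, IsAlgebraic (Algebra.adjoin k (Set.range u)) (Q.coeff m))
    (hQv : eval v Q = 0) : Q = 0 := by
  have hvu : AlgebraicIndependent k (Sum.elim v u) := by
    simpa using huv.comp Sum.swap Sum.swap_leftInverse.injective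
  have hv := (AlgebraicIndependent.sumElim_iff.mp hvu).2.subalgebraAlgebraicClosure
  obtain ⟨Q₀, rfl⟩ := mem_range_map_of_forall_coeff_mem (f := algebraMap
    (Subalgebra.algebraicClosure (Algebra.adjoin k (Set.range u)) F) F) fun m ↦ ⟨⟨_, hQ m⟩, rfl⟩
  rw [algebraicIndependent_iff] at hv
  rw [hv Q₀ (by rwa [aeval_def, ← eval_map]), map_zero]

theorem ValuationSubring.exists_coeff_ne_zero_forall_coeff_div_mem {K σ : Type*} [Field K]
    (R : ValuationSubring K) {P : MvPolynomial σ K} (hP : P ≠ 0) :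
    ∃ m₀, P.coeff m₀ ≠ 0 ∧ ∀ m, P.coeff m / P.coeff m₀ ∈ R := by
  obtain ⟨m₀, hm₀, hmax⟩ := P.support.exists_max_image (R.valuation ∘ P.coeff)
    (support_nonempty.mpr hP)
  refine ⟨m₀, mem_support_iff.mp hm₀, fun m ↦ ?_⟩
  rw [← R.valuation_le_one_iff, map_div₀]
  by_cases hm : m ∈ P.support
  · exact div_le_one_of_le₀ (hmax m hm) zero_le
  · simp [notMem_support_iff.mp hm]

theorem ValuationSubring.exists_map_subtype_eq_C_inv_coeff_mul {K σ : Type*} [Field K]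
    (R : ValuationSubring K) {P : MvPolynomial σ K} (hP : P ≠ 0) :
    ∃ (m₀ : σ →₀ ℕ) (Q : MvPolynomial σ R),
      P.coeff m₀ ≠ 0 ∧ map R.subtype Q = C (P.coeff m₀)⁻¹ * P := by
  obtain ⟨m₀, hm₀, hdiv⟩ := R.exists_coeff_ne_zero_forall_coeff_div_mem hP
  obtain ⟨Q, hQ⟩ := mem_range_map_of_forall_coeff_mem (f := R.subtype)
    (p := C (P.coeff m₀)⁻¹ * P) fun m ↦ ⟨⟨_, hdiv m⟩, by simp [coeff_C_mul, div_eq_inv_mul]⟩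
  exact ⟨m₀, Q, hm₀, hQ⟩

theorem stmt_1_general (k K : Type*) [Field k] [Field K] [Algebra k K]
    (R : ValuationSubring K) (hk : ∀ a : k, algebraMap k K a ∈ R)
    (K' : Subfield K)
    (r s : ℕ) (f : Fin r → R) (g : Fin s → R) :
    letI : Algebra k (ResidueField R) :=
      ((residue R).comp ((algebraMap k K).codRestrict R.toSubring hk)).toAlgebra
    letI : Algebra (↥K') K := K'.subtype.toAlgebra
    -- residues of the `fᵢ` are algebraically independent over `k`
    AlgebraicIndependent k (fun i => residue R (f i)) →
    -- and maximally so among residues of elements of `R ∩ K'` (transcendence basis)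
    (∀ x : R, (x : K) ∈ K' →
      ¬ AlgebraicIndependent k
        (fun o : Option (Fin r) => o.elim (residue R x) (fun i => residue R (f i)))) →
    -- the residues of the `fᵢ` and `gⱼ` together are algebraically independent over `k`
    AlgebraicIndependent k
      (Sum.elim (fun i => residue R (f i)) (fun j => residue R (g j))) →
    AlgebraicIndependent (↥K') (fun j => (g j : K)) := by
  let : Algebra k (ResidueField R) :=
    ((residue R).comp ((algebraMap k K).codRestrict R.toSubring hk)).toAlgebra
  intro hfInd hfMax hfg
  have hres_alg (x : R) (hx : (x : K) ∈ K') :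
      IsAlgebraic (Algebra.adjoin k (Set.range fun i ↦ residue R (f i))) (residue R x) :=
    by_contra fun h ↦ hfMax x hx ((hfInd.option_iff_transcendental _).mpr h)
  rw [algebraicIndependent_iff]
  intro P hP
  by_contra hP0
  obtain ⟨m₀, Q, hc₀, hQ⟩ := R.exists_map_subtype_eq_C_inv_coeff_mul
    ((map_injective _ (algebraMap K' K).injective).ne hP0 : map (algebraMap K' K) P ≠ 0)
  rw [coeff_map] at hc₀ hQ
  have hQ_coeff (m) :
      ((Q.coeff m : R) : K) = (algebraMap K' K (P.coeff m₀))⁻¹ * algebraMap K' K (P.coeff m) := by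
    simpa [coeff_map, coeff_C_mul] using congr_arg (coeff m) hQ
  have hQg : eval g Q = 0 := Subtype.ext <|
    calc ((eval g Q : R) : K) = eval (fun j ↦ (g j : K)) (map R.subtype Q) := by
          rw [eval_map]; exact eval₂_comp R.subtype g Q
      _ = (algebraMap K' K (P.coeff m₀))⁻¹ * aeval (fun j ↦ (g j : K)) P := by
          rw [hQ, eval_mul, eval_C, eval_map, aeval_def]
      _ = 0 := mul_eq_zero_of_right _ hP
  have hQ_res : map (residue R) Q = 0 :=
    hfg.eq_zero_of_eval_eq_zero_of_isAlgebraic_coeff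
      (fun m ↦ by
        rw [coeff_map]
        exact hres_alg _ (by rw [hQ_coeff]; exact mul_mem (inv_mem (P.coeff m₀).2) (P.coeff m).2))
      (by rw [eval_map, ← map_zero (residue R), ← hQg, eval₂_comp]; rfl)
  have hQm₀ : Q.coeff m₀ = 1 := Subtype.ext (by rw [hQ_coeff]; exact inv_mul_cancel₀ hc₀)
  simpa [coeff_map, hQm₀] using congr_arg (coeff m₀) hQ_res

/-- Lemma 2.5.  Let `ν` be a valuation on `K`, trivial on the algebraically closed base
field `k` (i.e. `k` is contained in the valuation ring `R`), and `K' ⊆ K` a subfield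
containing `k` with `m_R ∩ K' ≠ 0`.  Suppose `f₁, …, f_r ∈ R ∩ K'` have residues forming a
transcendence basis of `(R ∩ K')/(m_R ∩ K')` over `k` (viewed inside `R/m_R`: their residues
are algebraically independent, and adjoining the residue of any further element of `R ∩ K'`
destroys independence), and `g₁, …, g_s ∈ R` are such that the residues of the `fᵢ` and `gⱼ`
together are algebraically independent over `k`.  Then `g₁, …, g_s` are algebraically
independent over `K'`. -/
theorem stmt_1 (k K : Type*) [Field k] [IsAlgClosed k] [Field K] [Algebra k K]
    (R : ValuationSubring K) (hk : ∀ a : k, algebraMap k K a ∈ R)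
    (K' : Subfield K) (hkK' : ∀ a : k, algebraMap k K a ∈ K')
    (hm : ∃ x : R, x ∈ maximalIdeal R ∧ (x : K) ∈ K' ∧ (x : K) ≠ 0)
    (r s : ℕ) (f : Fin r → R) (hf : ∀ i, (f i : K) ∈ K') (g : Fin s → R) :
    letI : Algebra k (ResidueField R) :=
      ((residue R).comp ((algebraMap k K).codRestrict R.toSubring hk)).toAlgebra
    letI : Algebra (↥K') K := K'.subtype.toAlgebra
    -- residues of the `fᵢ` are algebraically independent over `k`
    AlgebraicIndependent k (fun i => residue R (f i)) →
    -- and maximally so among residues of elements of `R ∩ K'` (transcendence basis)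
    (∀ x : R, (x : K) ∈ K' →
      ¬ AlgebraicIndependent k
        (fun o : Option (Fin r) => o.elim (residue R x) (fun i => residue R (f i)))) →
    -- the residues of the `fᵢ` and `gⱼ` together are algebraically independent over `k`
    AlgebraicIndependent k
      (Sum.elim (fun i => residue R (f i)) (fun j => residue R (g j))) →
    AlgebraicIndependent (↥K') (fun j => (g j : K)) :=
  stmt_1_general k K R hk K' r s f g
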